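/- Let n be an even positive integer and let a, b, c, d be nonnegative integers with 0 ≤ b ≤ n−1 and 0 ≤ d ≤ n−1. Then, as a congruence in the polynomial ring ℤ[q] modulo the n-th cyclotomic polynomial Φ_n(q), one has D_q(an+b, cn+d) ≡ D_q(b,d) (mod Φ_n(q)). -/
import Mathlib


open Polynomial Finset

/-- The Gaussian (q-)binomial coefficient `[h choose k]_q` as a polynomial in `ℤ[q]`,
defined via the q-Pascal recurrence; it equals
`([h]_q [h−1]_q ⋯ [h−k+1]_q)/([k]_q ⋯ [1]_q)`. -/
noncomputable def qBinom : ℕ → ℕ → Polynomial ℤ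
  | _, 0 => 1
  | 0, _ + 1 => 0
  | h + 1, k + 1 => qBinom h k + Polynomial.X ^ (k + 1) * qBinom h (k + 1)

/-- The q-Delannoy number `D_q(h,k) = Σ_{j=0}^{h} q^{binom(j+1,2)} [k choose j]_q
[h+k−j choose k]_q`. -/
noncomputable def qDelannoy (h k : ℕ) : Polynomial ℤ :=
  ∑ j ∈ Finset.range (h + 1),
    Polynomial.X ^ ((j + 1).choose 2) * qBinom k j * qBinom (h + k - j) k

/-- The Delannoy number `D(h,k) = Σ_{j=0}^{h} binom(k,j) binom(h+k−j,k)`. -/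
def delannoy (h k : ℕ) : ℕ :=
  ∑ j ∈ Finset.range (h + 1), k.choose j * (h + k - j).choose k

-- basic qBinom lemmas
lemma qBinom_zero_right (h : ℕ) : qBinom h 0 = 1 := by cases h <;> rfl

lemma qBinom_succ_succ (h k : ℕ) :
    qBinom (h+1) (k+1) = qBinom h k + X ^ (k+1) * qBinom h (k+1) := rfl

lemma qBinom_eq_zero : ∀ {h k : ℕ}, h < k → qBinom h k = 0 := by
  intro h
  induction h with
  | zero => intro k hk; match k, hk with
    | k+1, _ => rfl
  | succ h ih =>
    intro k hk
    match k, hk with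
    | k+1, hk =>
      rw [qBinom_succ_succ, ih (by omega), ih (by omega)]
      ring

lemma qBinom_pascal' : ∀ (h k : ℕ),
    qBinom (h+1) (k+1) = qBinom h (k+1) + X ^ (h - k) * qBinom h k := by
  intro h
  induction h with
  | zero =>
    intro k
    cases k with
    | zero => simp [qBinom_succ_succ, qBinom_zero_right, qBinom_eq_zero (by omega : 0 < 1)]
    | succ k =>
      rw [qBinom_succ_succ, qBinom_eq_zero (by omega : 0 < k+1),
        qBinom_eq_zero (by omega : 0 < k+2)]
      ring
  | succ h ih =>
    intro k
    cases k with
    | zero =>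
      have d : qBinom (h+1) 1 = 1 + X * qBinom h 1 := by
        rw [qBinom_succ_succ h 0, qBinom_zero_right]; ring
      have i : qBinom (h+1) 1 = qBinom h 1 + X ^ h := by
        have := ih 0
        rwa [qBinom_zero_right, Nat.sub_zero, mul_one] at this
      show qBinom (h+1+1) 1 = qBinom (h+1) 1 + X ^ (h+1-0) * qBinom (h+1) 0
      rw [qBinom_succ_succ (h+1) 0, qBinom_zero_right, Nat.sub_zero]
      simp only [zero_add, pow_one, mul_one]
      linear_combination (X : Polynomial ℤ) * i - d
    | succ k =>
      have e1 : qBinom (h+1+1) (k+1+1)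
          = qBinom (h+1) (k+1) + X^(k+1+1) * qBinom (h+1) (k+1+1) := qBinom_succ_succ _ _
      have e2 : qBinom (h+1) (k+1) = qBinom h (k+1) + X^(h-k) * qBinom h k := ih k
      have e3 : qBinom (h+1) (k+1+1)
          = qBinom h (k+1+1) + X^(h-(k+1)) * qBinom h (k+1) := ih (k+1)
      have e4 : qBinom (h+1) (k+1+1)
          = qBinom h (k+1) + X^(k+1+1) * qBinom h (k+1+1) := qBinom_succ_succ _ _
      have e5 : qBinom (h+1) (k+1) = qBinom h k + X^(k+1) * qBinom h (k+1) := qBinom_succ_succ _ _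
      rcases le_or_gt (k+1) h with hkh | hkh
      · obtain ⟨e, rfl⟩ : ∃ e, h = k+1+e := ⟨h-(k+1), by omega⟩
        rw [show k+1+e - k = e+1 by omega] at e2
        rw [show k+1+e - (k+1) = e by omega] at e3
        rw [show k+1+e+1 - (k+1) = e+1 by omega]
        linear_combination e1 + e2 + X^(k+1+1) * e3 - e4 - (X:Polynomial ℤ)^(e+1) * e5
      · have z1 : qBinom h (k+1) = 0 := qBinom_eq_zero (by omega)
        have z2 : qBinom h (k+1+1) = 0 := qBinom_eq_zero (by omega)
        rw [e1, e2, e3, z1, z2, show h - k = 0 by omega, show h+1-(k+1) = 0 by omega]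
        ring

noncomputable def qb (ζ : ℂ) (h k : ℕ) : ℂ := Polynomial.aeval ζ (qBinom h k)

lemma qb_zero_right (ζ : ℂ) (h : ℕ) : qb ζ h 0 = 1 := by
  simp [qb, qBinom_zero_right]

lemma qb_eq_zero {ζ : ℂ} {h k : ℕ} (hk : h < k) : qb ζ h k = 0 := by
  simp [qb, qBinom_eq_zero hk]

lemma qb_self (ζ : ℂ) : ∀ h, qb ζ h h = 1 := by
  intro h
  induction h with
  | zero => simp [qb_zero_right]
  | succ h ih =>
    have : qb ζ (h+1) (h+1) = qb ζ h h + ζ^(h+1) * qb ζ h (h+1) := by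
      simp [qb, qBinom_succ_succ, mul_comm]
    rw [this, ih, qb_eq_zero (by omega)]; ring

lemma qb_pascal' (ζ : ℂ) (h k : ℕ) :
    qb ζ (h+1) (k+1) = qb ζ h (k+1) + ζ ^ (h-k) * qb ζ h k := by
  simp only [qb, qBinom_pascal', map_add, map_mul, map_pow, aeval_X]

noncomputable def GF (ζ : ℂ) (h : ℕ) : Polynomial ℂ :=
  ∏ i ∈ Finset.range h, (1 + C (ζ^i) * X)

lemma GF_eq (ζ : ℂ) : ∀ h, GF ζ h
    = ∑ k ∈ Finset.range (h+1), C (ζ^(k.choose 2) * qb ζ h k) * X^k := by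
  intro h
  induction h with
  | zero => simp [GF, qb_zero_right]
  | succ h ih =>
    have hGF : GF ζ (h+1) = GF ζ h * (1 + C (ζ^h) * X) := Finset.prod_range_succ _ _
    rw [hGF, ih]
    rw [Finset.sum_range_succ' (fun k => C (ζ^(k.choose 2) * qb ζ (h+1) k) * X^k) (h+1)]
    have key : ∀ k ∈ Finset.range (h+1),
        C (ζ^((k+1).choose 2) * qb ζ (h+1) (k+1)) * X^(k+1)
        = C (ζ^((k+1).choose 2) * qb ζ h (k+1)) * X^(k+1)
          + C (ζ^h) * X * (C (ζ^(k.choose 2) * qb ζ h k) * X^k) := by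
      intro k hk
      rw [Finset.mem_range] at hk
      rw [qb_pascal']
      have hch : (k+1).choose 2 = k.choose 2 + k := by
        rw [Nat.choose_succ_succ]
        simp [Nat.choose_one_right, Nat.add_comm]
      have hz : ζ^((k+1).choose 2) * (ζ^(h-k)) = ζ^(k.choose 2) * ζ^h := by
        rw [hch, ← pow_add, ← pow_add]
        congr 1
        omega
      rw [mul_add, map_add, add_mul]
      congr 1
      rw [show ζ^((k+1).choose 2) * (ζ^(h-k) * qb ζ h k) = (ζ^((k+1).choose 2) * ζ^(h-k)) * qb ζ h k by ring, hz]
      simp only [map_mul, C_mul]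
      ring
    rw [Finset.sum_congr rfl key, Finset.sum_add_distrib, ← Finset.mul_sum]
    have last0 : C (ζ^((h+1).choose 2) * qb ζ h (h+1)) * X^(h+1) = 0 := by
      rw [qb_eq_zero (by omega)]; simp
    have start : (C (ζ^(Nat.choose 0 2) * qb ζ (h+1) 0) * X^0 : Polynomial ℂ) = C 1 := by
      simp [qb_zero_right]
    have rsum : ∑ k ∈ Finset.range (h+1), C (ζ^((k+1).choose 2) * qb ζ h (k+1)) * X^(k+1)
        = ∑ k ∈ Finset.range (h+1+1), C (ζ^(k.choose 2) * qb ζ h k) * X^k - C 1 := by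
      rw [Finset.sum_range_succ' (fun k => C (ζ^(k.choose 2) * qb ζ h k) * X^k) (h+1)]
      simp [qb_zero_right]
    rw [Finset.sum_range_succ (fun k => C (ζ^(k.choose 2) * qb ζ h k) * X^k) (h+1)] at rsum
    rw [start, rsum, last0]
    ring

-- nat choose-two lemmas
lemma choose_two_succ (y : ℕ) : (y+1).choose 2 = y + y.choose 2 := by
  rw [Nat.choose_succ_succ]
  simp [Nat.choose_one_right]

lemma choose_two_add (x y : ℕ) : (x+y).choose 2 = x.choose 2 + x*y + y.choose 2 := by
  induction x with
  | zero => simp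
  | succ x ih =>
    have h1 : (x+1+y) = (x+y)+1 := by omega
    rw [h1, choose_two_succ, ih, choose_two_succ]
    ring

lemma two_mul_choose_two (x : ℕ) : 2 * x.choose 2 = x * (x-1) := by
  rw [Nat.choose_two_right]
  rcases x with _ | x
  · simp
  · have he : Even ((x+1) * x) := by
      rw [Nat.mul_comm]; exact Nat.even_mul_succ_self x
    simp only [Nat.add_sub_cancel]
    obtain ⟨k, hk⟩ := he
    omega

lemma altS_eq_one : ∀ c a : ℕ,
    (∑ i ∈ Finset.range (a+1), (-1:ℤ)^i * (c.choose i) * ((a+c-i).choose c)) = 1 := by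
  intro c
  induction c with
  | zero =>
    intro a
    rw [Finset.sum_eq_single 0]
    · simp
    · intro i _ hi
      rw [Nat.choose_eq_zero_of_lt (by omega : 0 < i)]
      push_cast
      ring
    · intro h
      exact absurd (Finset.mem_range.2 (by omega)) h
  | succ c ihc =>
    intro a
    induction a with
    | zero => simp
    | succ a iha =>
      have step1 : ∀ i ∈ Finset.range (a+1+1),
          (-1:ℤ)^i * ((c+1).choose i) * ((a+1+(c+1)-i).choose (c+1))
          = ((-1:ℤ)^i * ((c+1).choose i) * ((a+c+1-i).choose c))
            + ((-1:ℤ)^i * ((c+1).choose i) * ((a+c+1-i).choose (c+1))) := by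
        intro i hi
        rw [Finset.mem_range] at hi
        rw [show a+1+(c+1)-i = (a+c+1-i)+1 by omega, Nat.choose_succ_succ]
        push_cast
        ring
      rw [Finset.sum_congr rfl step1, Finset.sum_add_distrib]
      have hT2 : (∑ i ∈ Finset.range (a+1+1),
          (-1:ℤ)^i * ((c+1).choose i) * ((a+c+1-i).choose (c+1))) = 1 := by
        rw [Finset.sum_range_succ, show a+c+1-(a+1) = c by omega, Nat.choose_succ_self]
        have heq : ∀ i ∈ Finset.range (a+1),
            (-1:ℤ)^i * ((c+1).choose i) * ((a+c+1-i).choose (c+1))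
            = (-1:ℤ)^i * ((c+1).choose i) * ((a+(c+1)-i).choose (c+1)) := by
          intro i hi
          rw [Finset.mem_range] at hi
          rw [show a+c+1-i = a+(c+1)-i by omega]
        rw [Finset.sum_congr rfl heq, iha]
        simp
      have hU : (∑ i ∈ Finset.range (a+1+1),
          (-1:ℤ)^i * ((c+1).choose i) * ((a+c+1-i).choose c))
          = (∑ i ∈ Finset.range (a+1),
              (-((-1:ℤ)^i * (c.choose i) * ((a+c-i).choose c))
               + (-((-1:ℤ)^i * (c.choose (i+1)) * ((a+c-i).choose c)))))
            + ((a+c+1).choose c : ℤ) := by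
        rw [Finset.sum_range_succ' (fun i =>
          (-1:ℤ)^i * ((c+1).choose i) * ((a+c+1-i).choose c)) (a+1)]
        simp only [pow_zero, Nat.choose_zero_right, Nat.cast_one, one_mul, Nat.sub_zero]
        congr 1
        apply Finset.sum_congr rfl
        intro i hi
        rw [Finset.mem_range] at hi
        rw [show a+c+1-(i+1) = a+c-i by omega, Nat.choose_succ_succ]
        push_cast
        ring
      have hAS1 : (∑ i ∈ Finset.range (a+1+1),
          (-1:ℤ)^i * (c.choose i) * ((a+1+c-i).choose c)) = 1 := ihc (a+1)
      have hexp1 : (∑ i ∈ Finset.range (a+1+1),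
          (-1:ℤ)^i * (c.choose i) * ((a+1+c-i).choose c))
          = (∑ i ∈ Finset.range (a+1),
              (-((-1:ℤ)^i * (c.choose (i+1)) * ((a+c-i).choose c))))
            + ((a+c+1).choose c : ℤ) := by
        rw [Finset.sum_range_succ' (fun i =>
          (-1:ℤ)^i * (c.choose i) * ((a+1+c-i).choose c)) (a+1)]
        simp only [pow_zero, Nat.choose_zero_right, Nat.cast_one, one_mul, Nat.sub_zero]
        congr 1
        · apply Finset.sum_congr rfl
          intro i hi
          rw [Finset.mem_range] at hi
          rw [show a+1+c-(i+1) = a+c-i by omega]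
          ring
        · rw [show a+1+c = a+c+1 by omega]
      have hAS1' : (∑ i ∈ Finset.range (a+1),
            (-((-1:ℤ)^i * (c.choose (i+1)) * ((a+c-i).choose c))))
          + ((a+c+1).choose c : ℤ) = 1 := hexp1.symm.trans hAS1
      have hAS0 : (∑ i ∈ Finset.range (a+1),
          (-1:ℤ)^i * (c.choose i) * ((a+c-i).choose c)) = 1 := ihc a
      rw [hT2, hU]
      rw [Finset.sum_add_distrib]
      have hneg : (∑ i ∈ Finset.range (a+1),
          (-((-1:ℤ)^i * (c.choose i) * ((a+c-i).choose c))))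
          = -(∑ i ∈ Finset.range (a+1), (-1:ℤ)^i * (c.choose i) * ((a+c-i).choose c)) := by
        rw [← Finset.sum_neg_distrib]
      rw [hneg, hAS0]
      linarith [hAS1']


section Root
set_option linter.unusedSectionVars false

variable {n m : ℕ} {ζ : ℂ} (hζ : IsPrimitiveRoot ζ n) (hnm : n = 2*m) (hm0 : 0 < m)

include hζ hnm hm0

lemma zeta_pow_n : ζ^n = 1 := hζ.pow_eq_one

lemma zeta_pow_m : ζ^m = -1 :=
  (hζ.pow (by omega) (by omega : n = m*2)).eq_neg_one_of_two_right

lemma zeta_ne_zero : ζ ≠ 0 := hζ.ne_zero (by omega)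

lemma zeta_choose_n : ζ^(n.choose 2) = -1 := by
  have h1 : 2 * n.choose 2 = 2 * (m * (n-1)) := by
    rw [two_mul_choose_two, hnm]
    generalize (2*m - 1) = t
    ring
  have h2 : n.choose 2 = m * (n-1) := by omega
  rw [h2, pow_mul, zeta_pow_m hζ hnm hm0]
  have : Odd (n - 1) := by
    refine ⟨m - 1, by omega⟩
  exact this.neg_one_pow

lemma zeta_choose_add_n (x : ℕ) : ζ^((x+n).choose 2) = - ζ^(x.choose 2) := by
  rw [choose_two_add, pow_add, pow_add, zeta_choose_n hζ hnm hm0, pow_mul',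
    zeta_pow_n hζ hnm hm0, one_pow]
  ring

lemma zeta_lucas_sign (i r : ℕ) : ζ^((i*n + r).choose 2) = (-1)^i * ζ^(r.choose 2) := by
  induction i with
  | zero => simp
  | succ i ih =>
    have h1 : (i+1)*n + r = (i*n + r) + n := by ring
    rw [h1, zeta_choose_add_n hζ hnm hm0, ih]
    ring

lemma one_add_ne (s : ℕ) : (1 + C (ζ^s) * X : Polynomial ℂ) ≠ 0 := fun h => by
  have := congrArg (Polynomial.eval 0) h
  simp at this

omit hζ hnm hm0 in
lemma X_add_C_ne (c : ℂ) : (X + C c : Polynomial ℂ) ≠ 0 := fun h => by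
  have := congrArg (fun p => Polynomial.coeff p 1) h
  simp at this

lemma shift_prod : ∀ s, (∏ j ∈ Finset.range n, (1 + C (ζ^(s+j)) * X)) = GF ζ n := by
  intro s
  induction s with
  | zero => simp [GF]
  | succ s ih =>
    have h1 : ∏ j ∈ Finset.range (n+1), (1 + C (ζ^(s+j)) * X)
        = (∏ j ∈ Finset.range n, (1 + C (ζ^(s+(j+1))) * X)) * (1 + C (ζ^(s+0)) * X) :=
      Finset.prod_range_succ' _ n
    have h2 : ∏ j ∈ Finset.range (n+1), (1 + C (ζ^(s+j)) * X)
        = (∏ j ∈ Finset.range n, (1 + C (ζ^(s+j)) * X)) * (1 + C (ζ^(s+n)) * X) :=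
      Finset.prod_range_succ _ n
    have h3 : ζ^(s+n) = ζ^s := by rw [pow_add, zeta_pow_n hζ hnm hm0, mul_one]
    have h4 : (∏ j ∈ Finset.range n, (1 + C (ζ^(s+(j+1))) * X))
        = ∏ j ∈ Finset.range n, (1 + C (ζ^(s+1+j)) * X) := by
      apply Finset.prod_congr rfl
      intro j _
      rw [show s+(j+1) = s+1+j by omega]
    apply mul_left_cancel₀ (one_add_ne hζ hnm hm0 s)
    have key : (1 + C (ζ^s) * X) * ∏ j ∈ Finset.range n, (1 + C (ζ^(s+1+j)) * X)
        = (1 + C (ζ^s) * X) * ∏ j ∈ Finset.range n, (1 + C (ζ^(s+j)) * X) := by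
      rw [← h4, mul_comm]
      rw [show (1 + C (ζ^s) * X : Polynomial ℂ) = 1 + C (ζ^(s+0)) * X by norm_num]
      rw [← h1, h2, h3]
      exact mul_comm _ _
    rw [key, ih]

lemma prod_X_sub : ∏ i ∈ Finset.range n, (X - C (ζ^i) : Polynomial ℂ) = X^n - 1 := by
  have h0 := X_pow_sub_C_eq_prod hζ (show 0 < n by omega) (one_pow n)
  simp only [mul_one, map_one] at h0
  exact h0.symm

lemma prod_X_add : ∏ i ∈ Finset.range n, (X + C (ζ^i) : Polynomial ℂ) = X^n - 1 := by
  have he : Even n := ⟨m, by omega⟩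
  have h1 := congrArg (aeval (-X : Polynomial ℂ)) (prod_X_sub hζ hnm hm0)
  simp only [map_prod, map_sub, map_pow, aeval_X, aeval_C, map_one] at h1
  simp only [Polynomial.algebraMap_eq, ← C_pow] at h1
  rw [he.neg_pow] at h1
  have h2 : ∏ i ∈ Finset.range n, (-X - C (ζ^i) : Polynomial ℂ)
      = (-1)^n * ∏ i ∈ Finset.range n, (X + C (ζ^i)) := by
    calc ∏ i ∈ Finset.range n, (-X - C (ζ^i) : Polynomial ℂ)
        = ∏ i ∈ Finset.range n, ((-1) * (X + C (ζ^i))) :=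
          Finset.prod_congr rfl (fun i _ => by ring)
      _ = (∏ _i ∈ Finset.range n, (-1 : Polynomial ℂ)) * ∏ i ∈ Finset.range n, (X + C (ζ^i)) :=
          Finset.prod_mul_distrib
      _ = (-1)^n * ∏ i ∈ Finset.range n, (X + C (ζ^i)) := by
          rw [Finset.prod_const, Finset.card_range]
  rw [h2, he.neg_one_pow, one_mul] at h1
  exact h1

lemma prod_X_add_shift : ∏ j ∈ Finset.range n, (X + C (ζ^(j+1)) : Polynomial ℂ)
    = ∏ j ∈ Finset.range n, (X + C (ζ^j)) := by
  apply mul_left_cancel₀ (X_add_C_ne (ζ^0))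
  have h1 := (Finset.prod_range_succ' (fun j => (X + C (ζ^j) : Polynomial ℂ)) n).symm
  have h2 := Finset.prod_range_succ (fun j => (X + C (ζ^j) : Polynomial ℂ)) n
  rw [show (ζ^n) = ζ^0 from by rw [zeta_pow_n hζ hnm hm0, pow_zero]] at h2
  calc (X + C (ζ^0)) * ∏ j ∈ Finset.range n, (X + C (ζ^(j+1)) : Polynomial ℂ)
      = (∏ j ∈ Finset.range n, (X + C (ζ^(j+1)) : Polynomial ℂ)) * (X + C (ζ^0)) := mul_comm _ _
    _ = ∏ j ∈ Finset.range (n+1), (X + C (ζ^j) : Polynomial ℂ) := h1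
    _ = (∏ j ∈ Finset.range n, (X + C (ζ^j) : Polynomial ℂ)) * (X + C (ζ^0)) := h2
    _ = (X + C (ζ^0)) * ∏ j ∈ Finset.range n, (X + C (ζ^j) : Polynomial ℂ) := mul_comm _ _

lemma GF_n : GF ζ n = 1 - X^n := by
  have hfac : ∀ i ∈ Finset.range n, (1 + C (ζ^i) * X : Polynomial ℂ)
      = C (ζ^i) * (X + C (ζ^(n-i))) := by
    intro i hi
    rw [Finset.mem_range] at hi
    have hone : ζ^i * ζ^(n-i) = 1 := by
      rw [← pow_add, show i + (n-i) = n by omega, zeta_pow_n hζ hnm hm0]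
    rw [mul_add, ← C_mul, hone]
    simp [add_comm, mul_comm]
  rw [GF, Finset.prod_congr rfl hfac, Finset.prod_mul_distrib]
  have hc : (∏ i ∈ Finset.range n, C (ζ^i) : Polynomial ℂ) = C (-1) := by
    rw [← map_prod, Finset.prod_pow_eq_pow_sum]
    have hsum : ∑ i ∈ Finset.range n, i = n.choose 2 := by
      have := Finset.sum_range_id_mul_two n
      have := two_mul_choose_two n
      omega
    rw [hsum, zeta_choose_n hζ hnm hm0]
  have hr : ∏ i ∈ Finset.range n, (X + C (ζ^(n-i)) : Polynomial ℂ) = X^n - 1 := by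
    have hcg : ∀ i ∈ Finset.range n, (X + C (ζ^(n-i)) : Polynomial ℂ)
        = (fun j => X + C (ζ^(j+1))) (n-1-i) := by
      intro i hi
      rw [Finset.mem_range] at hi
      simp only
      rw [show n-i = (n-1-i)+1 by omega]
    rw [Finset.prod_congr rfl hcg,
      Finset.prod_range_reflect (fun j => (X + C (ζ^(j+1)) : Polynomial ℂ)) n,
      prod_X_add_shift hζ hnm hm0, prod_X_add hζ hnm hm0]
  rw [hc, hr, map_neg, map_one]
  ring

lemma GF_add_n (s : ℕ) : GF ζ (s + n) = GF ζ s * (1 - X^n) := by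
  rw [GF, Finset.prod_range_add, ← GF, shift_prod hζ hnm hm0, GF_n hζ hnm hm0]

lemma GF_split (a b : ℕ) : GF ζ (a*n + b) = (1 - X^n)^a * GF ζ b := by
  induction a with
  | zero => simp
  | succ a ih =>
    rw [show (a+1)*n + b = (a*n+b)+n by ring, GF_add_n hζ hnm hm0, ih]
    ring

omit hζ hnm hm0 in
lemma monoCoeff {ι : Type*} (s : Finset ι) (f : ι → ℂ) (e : ι → ℕ) (t : ℕ) :
    (∑ k ∈ s, C (f k) * X^(e k)).coeff t = ∑ k ∈ s, if e k = t then f k else 0 := by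
  rw [Polynomial.finset_sum_coeff]
  apply Finset.sum_congr rfl
  intro k _
  rw [Polynomial.coeff_C_mul, Polynomial.coeff_X_pow]
  simp [eq_comm]

omit hζ hnm hm0 in
lemma digit_unique {i c r d : ℕ} (hr : r < n) (hd : d < n) (h : n*i + r = n*c + d) :
    i = c ∧ r = d := by
  have hic : i = c := by
    by_contra hne
    rcases Nat.lt_or_ge i c with hl | hg
    · have h1 : n*(i+1) ≤ n*c := Nat.mul_le_mul_left n hl
      have h2 : n*(i+1) = n*i + n := by ring
      omega
    · have hg' : c < i := by omega
      have h1 : n*(c+1) ≤ n*i := Nat.mul_le_mul_left n hg'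
      have h2 : n*(c+1) = n*c + n := by ring
      omega
  subst hic
  exact ⟨rfl, by omega⟩

lemma qb_lucas (a c b d : ℕ) (hb : b < n) (hd : d < n) :
    qb ζ (a*n+b) (c*n+d) = (a.choose c : ℂ) * qb ζ b d := by
  have hL : (GF ζ (a*n+b)).coeff (c*n+d)
      = ζ^((c*n+d).choose 2) * qb ζ (a*n+b) (c*n+d) := by
    rw [GF_eq, monoCoeff]
    rw [Finset.sum_ite_eq' (Finset.range (a*n+b+1)) (c*n+d)
      (fun k => ζ^(k.choose 2) * qb ζ (a*n+b) k)]
    split_ifs with h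
    · rfl
    · rw [Finset.mem_range] at h
      rw [qb_eq_zero (show a*n+b < c*n+d by omega), mul_zero]
  have hexp : ((1 - X^n : Polynomial ℂ))^a
      = ∑ i ∈ Finset.range (a+1), C ((-1)^i * (a.choose i : ℂ)) * X^(n*i) := by
    rw [show (1 - X^n : Polynomial ℂ) = (-X^n) + 1 by ring, add_pow]
    apply Finset.sum_congr rfl
    intro i _
    have hneg : ((-X^n : Polynomial ℂ))^i = C ((-1)^i) * X^(n*i) := by
      rw [neg_pow, pow_mul, map_pow, map_neg, map_one]
    rw [hneg, one_pow, mul_one, C_mul, ← Polynomial.C_eq_natCast]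
    ring
  have hR : ((1 - X^n)^a * GF ζ b).coeff (c*n+d)
      = (-1)^c * (a.choose c : ℂ) * (ζ^(d.choose 2) * qb ζ b d) := by
    rw [hexp, GF_eq ζ b, Finset.sum_mul_sum]
    have hterm : ∀ i ∈ Finset.range (a+1), ∀ r ∈ Finset.range (b+1),
        (C ((-1)^i * (a.choose i:ℂ)) * X^(n*i)) * (C (ζ^(r.choose 2) * qb ζ b r) * X^r)
        = C ((-1)^i * (a.choose i:ℂ) * (ζ^(r.choose 2) * qb ζ b r)) * X^(n*i+r) := by
      intro i _ r _
      simp only [C_mul, pow_add]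
      ring
    rw [Finset.sum_congr rfl (fun i hi => Finset.sum_congr rfl (hterm i hi))]
    rw [Polynomial.finset_sum_coeff]
    have hin : ∀ i ∈ Finset.range (a+1),
        (∑ r ∈ Finset.range (b+1),
          C ((-1)^i * (a.choose i:ℂ) * (ζ^(r.choose 2) * qb ζ b r)) * X^(n*i+r)).coeff (c*n+d)
        = if i = c ∧ d < b+1
            then (-1)^i * (a.choose i:ℂ) * (ζ^(d.choose 2) * qb ζ b d) else 0 := by
      intro i _
      rw [monoCoeff]
      have hcond : ∀ r ∈ Finset.range (b+1),
          (if n*i+r = c*n+d then (-1)^i * (a.choose i:ℂ) * (ζ^(r.choose 2) * qb ζ b r) else 0)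
          = if i = c ∧ r = d
              then (-1)^i * (a.choose i:ℂ) * (ζ^(r.choose 2) * qb ζ b r) else 0 := by
        intro r hr
        rw [Finset.mem_range] at hr
        refine if_congr ⟨fun h => ?_, fun h => ?_⟩ rfl rfl
        · rw [mul_comm c n] at h
          exact digit_unique (by omega : r < n) hd h
        · obtain ⟨h1, h2⟩ := h
          subst h1; subst h2
          ring
      rw [Finset.sum_congr rfl hcond]
      by_cases hic : i = c
      · subst hic
        simp only [true_and]
        rw [Finset.sum_ite_eq' (Finset.range (b+1)) d
          (fun r => (-1)^i * (a.choose i:ℂ) * (ζ^(r.choose 2) * qb ζ b r))]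
        simp [Finset.mem_range]
      · simp [hic]
    rw [Finset.sum_congr rfl hin]
    by_cases hdb : d < b+1
    · simp only [hdb, and_true]
      rw [Finset.sum_ite_eq' (Finset.range (a+1)) c
        (fun i => (-1)^i * (a.choose i:ℂ) * (ζ^(d.choose 2) * qb ζ b d))]
      split_ifs with h
      · rfl
      · rw [Finset.mem_range] at h
        rw [Nat.choose_eq_zero_of_lt (by omega : a < c)]
        simp
    · have : qb ζ b d = 0 := qb_eq_zero (by omega)
      simp [hdb, this]
  have hGF := congrArg (fun p => Polynomial.coeff p (c*n+d)) (GF_split hζ hnm hm0 a b)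
  have hmain : ζ^((c*n+d).choose 2) * qb ζ (a*n+b) (c*n+d)
      = (-1)^c * (a.choose c : ℂ) * (ζ^(d.choose 2) * qb ζ b d) := by
    rw [← hL, hGF, hR]
  have hsgn : ζ^((c*n+d).choose 2) = (-1)^c * ζ^(d.choose 2) :=
    zeta_lucas_sign hζ hnm hm0 c d
  have hnz : ((-1:ℂ))^c * ζ^(d.choose 2) ≠ 0 :=
    mul_ne_zero (pow_ne_zero _ (by norm_num)) (pow_ne_zero _ (zeta_ne_zero hζ hnm hm0))
  apply mul_left_cancel₀ hnz
  rw [← hsgn]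
  rw [hmain, hsgn]
  ring

omit hζ hnm hm0 in
lemma sum_blocks (M N : ℕ) (f : ℕ → ℂ) :
    ∑ j ∈ Finset.range (M*N), f j = ∑ i ∈ Finset.range M, ∑ r ∈ Finset.range N, f (i*N + r) := by
  induction M with
  | zero => simp
  | succ M ih =>
    rw [Finset.sum_range_succ (fun i => ∑ r ∈ Finset.range N, f (i*N+r)) M, ← ih,
      show (M+1)*N = M*N + N by ring, Finset.sum_range_add]

lemma qdel_main (a b c d : ℕ) (hb : b < n) (hd : d < n) :
    (∑ j ∈ Finset.range (a*n+b+1),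
      ζ^((j+1).choose 2) * qb ζ (c*n+d) j * qb ζ (a*n+b+(c*n+d)-j) (c*n+d))
    = ∑ j ∈ Finset.range (b+1), ζ^((j+1).choose 2) * qb ζ d j * qb ζ (b+d-j) d := by
  -- the generic vanishing of qb ζ (b+d-r) d when n ≤ b+d-r
  have hqbv : ∀ r : ℕ, r ≤ d → n ≤ b+d-r → qb ζ (b+d-r) d = 0 := by
    intro r hrd hge
    have hrem : b+d-r-n < n := by omega
    have h1 := qb_lucas hζ hnm hm0 1 0 (b+d-r-n) d hrem hd
    rw [show 1*n+(b+d-r-n) = b+d-r by omega, show 0*n+d = d by omega] at h1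
    rw [h1, qb_eq_zero (show b+d-r-n < d by omega), mul_zero]
  -- step A : extend the sum
  have hA : (∑ j ∈ Finset.range (a*n+b+1),
      ζ^((j+1).choose 2) * qb ζ (c*n+d) j * qb ζ (a*n+b+(c*n+d)-j) (c*n+d))
      = ∑ j ∈ Finset.range ((a+1)*n),
        ζ^((j+1).choose 2) * qb ζ (c*n+d) j * qb ζ (a*n+b+(c*n+d)-j) (c*n+d) := by
    have hmul : (a+1)*n = a*n + n := by ring
    apply Finset.sum_subset
    · intro j hj
      rw [Finset.mem_range] at hj ⊢
      omega
    · intro j hj hnj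
      rw [Finset.mem_range] at hj
      rw [Finset.mem_range] at hnj
      push_neg at hnj
      set r := j - a*n with hr
      have hjr : j = a*n + r := by omega
      have hrn : r < n := by omega
      have hrb : b < r := by omega
      rcases Nat.lt_or_ge d r with hdr | hrd
      · -- middle factor vanishes
        have h1 := qb_lucas hζ hnm hm0 c a d r hd hrn
        rw [hjr, h1, qb_eq_zero hdr]
        ring
      · -- third factor vanishes
        have hidx : a*n+b+(c*n+d)-j = c*n + (b+d-r) := by omega
        have hlt : b+d-r < n := by omega
        have h2 := qb_lucas hζ hnm hm0 c c (b+d-r) d hlt hd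
        rw [hidx, h2, qb_eq_zero (show b+d-r < d by omega)]
        ring
  rw [hA, sum_blocks]
  -- step C : evaluate each term
  have hC : ∀ i ∈ Finset.range (a+1), ∀ r ∈ Finset.range n,
      ζ^((i*n+r+1).choose 2) * qb ζ (c*n+d) (i*n+r)
          * qb ζ (a*n+b+(c*n+d)-(i*n+r)) (c*n+d)
      = ((-1:ℂ)^i * ((c.choose i : ℂ)) * (((a+c-i).choose c : ℂ)))
        * (ζ^((r+1).choose 2) * qb ζ d r * qb ζ (b+d-r) d) := by
    intro i hi r hr
    rw [Finset.mem_range] at hi hr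
    have hsgn : ζ^((i*n+r+1).choose 2) = (-1:ℂ)^i * ζ^((r+1).choose 2) := by
      have := zeta_lucas_sign hζ hnm hm0 i (r+1)
      rw [show i*n+(r+1) = i*n+r+1 by omega] at this
      exact this
    have hmid : qb ζ (c*n+d) (i*n+r) = (c.choose i : ℂ) * qb ζ d r :=
      qb_lucas hζ hnm hm0 c i d r hd hr
    rcases Nat.lt_or_ge d r with hdr | hrd
    · rw [hsgn, hmid, qb_eq_zero hdr]
      ring
    · -- r ≤ d
      have hkey : (a+c-i)*n + i*n = a*n + c*n := by
        rw [← Nat.add_mul, show a+c-i+i = a+c by omega, Nat.add_mul]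
      rcases Nat.lt_or_ge (b+d-r) n with hlt | hge
      · have hidx : a*n+b+(c*n+d)-(i*n+r) = (a+c-i)*n + (b+d-r) := by omega
        have h3 := qb_lucas hζ hnm hm0 (a+c-i) c (b+d-r) d hlt hd
        rw [hsgn, hmid, hidx, h3]
        ring
      · -- carry case : both sides vanish
        have hrem : b+d-r-n < n := by omega
        have hidx : a*n+b+(c*n+d)-(i*n+r) = (a+c-i+1)*n + (b+d-r-n) := by
          have : (a+c-i+1)*n = (a+c-i)*n + n := by ring
          omega
        have h3 := qb_lucas hζ hnm hm0 (a+c-i+1) c (b+d-r-n) d hrem hd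
        rw [hsgn, hmid, hidx, h3, qb_eq_zero (show b+d-r-n < d by omega),
          hqbv r hrd hge]
        ring
  rw [Finset.sum_congr rfl (fun i hi => Finset.sum_congr rfl (hC i hi))]
  rw [← Finset.sum_mul_sum]
  have hS : (∑ i ∈ Finset.range (a+1),
      ((-1:ℂ)^i * ((c.choose i : ℂ)) * (((a+c-i).choose c : ℂ)))) = 1 := by
    have h0 := altS_eq_one c a
    have h1 : ((∑ i ∈ Finset.range (a+1),
        (-1:ℤ)^i * (c.choose i) * ((a+c-i).choose c) : ℤ) : ℂ) = 1 := by
      rw [h0]; norm_num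
    push_cast at h1
    exact h1
  rw [hS, one_mul]
  -- step D : truncate the r-sum
  symm
  apply Finset.sum_subset
  · intro j hj
    rw [Finset.mem_range] at hj ⊢
    omega
  · intro r hr hnr
    rw [Finset.mem_range] at hr
    rw [Finset.mem_range] at hnr
    push_neg at hnr
    rcases Nat.lt_or_ge d r with hdr | hrd
    · rw [qb_eq_zero hdr]; ring
    · rcases Nat.lt_or_ge (b+d-r) n with hlt | hge
      · rw [qb_eq_zero (show b+d-r < d by omega)]; ring
      · rw [hqbv r hrd hge]; ring

end Root

theorem qDelannoy_lucas_even (n : ℕ) (hn : 0 < n) (heven : Even n)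
    (a b c d : ℕ) (hb : b ≤ n - 1) (hd : d ≤ n - 1) :
    Polynomial.cyclotomic n ℤ ∣
      qDelannoy (a * n + b) (c * n + d) - qDelannoy b d := by
  obtain ⟨m, hm2⟩ := heven
  have hnm : n = 2*m := by omega
  have hm0 : 0 < m := by omega
  have hζ : IsPrimitiveRoot (Complex.exp (2 * Real.pi * Complex.I / n)) n :=
    Complex.isPrimitiveRoot_exp n hn.ne'
  set ζ := Complex.exp (2 * Real.pi * Complex.I / n) with hzdef
  suffices h0 : Polynomial.aeval ζ (qDelannoy (a*n+b) (c*n+d) - qDelannoy b d) = 0 by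
    rw [Polynomial.cyclotomic_eq_minpoly hζ hn]
    exact minpoly.isIntegrallyClosed_dvd (hζ.isIntegral hn) h0
  have hD : ∀ h k : ℕ, Polynomial.aeval ζ (qDelannoy h k)
      = ∑ j ∈ Finset.range (h+1), ζ^((j+1).choose 2) * qb ζ k j * qb ζ (h+k-j) k := by
    intro h k
    rw [qDelannoy, map_sum]
    apply Finset.sum_congr rfl
    intro j _
    simp [qb, map_mul, map_pow, aeval_X]
  rw [map_sub, hD, hD, sub_eq_zero]
  exact qdel_main hζ hnm hm0 a b c d (by omega) (by omega)
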